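/- arXiv:1109.3853 — 3 statements merged into one kernel-verified Lean document; each statement's English description precedes it below -/
import Mathlib

section
/- Suppose the eigenvalues κ₁,...,κₙ of A(ξ) are distinct positive reals, ξ ≠ 0, κ > 0, γ ≠ 0. Then the matrix B(ξ) has a purely real eigenvalue if and only if some coupling function a_j(ξ) vanishes; in that case ±ω_j(ξ) = ±√κ_j(ξ) are eigenvalues of B(ξ). -/
open Matrix BigOperators

/-- The coefficient matrix B(ξ) of the thermo-elastic first order system, eq. (2.9):
diagonal ω₁,…,ωₙ,−ω₁,…,−ωₙ,iκs (s = |ξ|²), last column iγa_j, last row (iγ/2)a_j. -/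
noncomputable def Bmat (n : ℕ) (ω a : Fin n → ℝ) (γ κ s : ℝ) :
    Matrix (Fin (2 * n + 1)) (Fin (2 * n + 1)) ℂ := Matrix.of fun i j =>
  if hi : (i : ℕ) < n then
    if hj : (j : ℕ) < n then
      (if (i : ℕ) = (j : ℕ) then ((ω ⟨i, hi⟩ : ℝ) : ℂ) else 0)
    else if (j : ℕ) < 2 * n then 0
    else Complex.I * (γ : ℂ) * ((a ⟨i, hi⟩ : ℝ) : ℂ)
  else if hi2 : (i : ℕ) < 2 * n then
    if hj : (j : ℕ) < n then 0
    else if hj2 : (j : ℕ) < 2 * n then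
      (if (i : ℕ) = (j : ℕ) then -((ω ⟨(i : ℕ) - n, by omega⟩ : ℝ) : ℂ) else 0)
    else Complex.I * (γ : ℂ) * ((a ⟨(i : ℕ) - n, by omega⟩ : ℝ) : ℂ)
  else
    if hj : (j : ℕ) < n then Complex.I * (γ : ℂ) / 2 * ((a ⟨j, hj⟩ : ℝ) : ℂ)
    else if hj2 : (j : ℕ) < 2 * n then
      Complex.I * (γ : ℂ) / 2 * ((a ⟨(j : ℕ) - n, by omega⟩ : ℝ) : ℂ)
    else Complex.I * (κ : ℂ) * (s : ℂ)

/-!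
After reordering the basis as (ω-block, (−ω)-block, last coordinate), `ν • 1 - B(ξ)` is an
arrowhead matrix: diagonal `ν ∓ ω_j`, last column and last row proportional to `a_j`, corner
`ν − iκ|ξ|²`. If `a_j = 0`, the row belonging to `±ω_j` vanishes at `ν = ±ω_j`. Conversely let
`(y, θ)` be a null vector for a real `ν`. If `ν` is none of the `±ω_j`, then `θ ≠ 0`, and
eliminating `y` makes `ν − iκ|ξ|²` equal to a Schur complement which is real because the products
of matching column and row entries, `−γ² a_j² / 2`, are real; this is absurd. Hence `ν = ±ω_j`
for exactly one index (the `±ω_j` are pairwise distinct), and then either `θ ≠ 0` and that row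
forces `a_j = 0`, or `θ = 0`, `y` is supported at that index and the last row forces `a_j = 0`.
-/

namespace Matrix

variable {K ι : Type*} [Fintype ι] [DecidableEq ι]

def arrowhead [Zero K] (D c r : ι → K) (e : K) : Matrix (ι ⊕ Unit) (ι ⊕ Unit) K :=
  fromBlocks (diagonal D) (replicateCol Unit c) (replicateRow Unit r) (of fun _ _ => e)

section CommRing

variable [CommRing K] {D c r : ι → K} {e : K}

@[simp]
lemma arrowhead_mulVec_inl (x : ι ⊕ Unit → K) (i : ι) :
    (arrowhead D c r e *ᵥ x) (.inl i) = D i * x (.inl i) + c i * x (.inr ()) := by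
  simp [arrowhead, mulVec, dotProduct, diagonal_apply]

@[simp]
lemma arrowhead_mulVec_inr (x : ι ⊕ Unit → K) :
    (arrowhead D c r e *ᵥ x) (.inr ()) = ∑ i, r i * x (.inl i) + e * x (.inr ()) := by
  simp [arrowhead, mulVec, dotProduct]

lemma det_arrowhead_eq_zero {i : ι} (hD : D i = 0) (hc : c i = 0) :
    det (arrowhead D c r e) = 0 :=
  det_eq_zero_of_row_eq_zero (.inl i) fun t => by
    rcases t with k | _
    · by_cases hk : i = k
      · simp [arrowhead, ← hk, hD]
      · simp [arrowhead, hk]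
    · simp [arrowhead, hc]

end CommRing

lemma exists_eq_zero_of_det_arrowhead_eq_zero [Field K] {D c r : ι → K} {e : K}
    (hD : ∀ i k, D i = 0 → D k = 0 → i = k)
    (hschur : (∀ i, D i ≠ 0) → ∑ i, r i * c i / D i ≠ e)
    (h : det (arrowhead D c r e) = 0) : ∃ i, D i = 0 ∧ (c i = 0 ∨ r i = 0) := by
  obtain ⟨x, hx0, hx⟩ := exists_mulVec_eq_zero_iff.mpr h
  set θ := x (.inr ())
  have hrow (i : ι) : D i * x (.inl i) + c i * θ = 0 := by
    simpa using congrFun hx (.inl i)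
  have hlast : ∑ i, r i * x (.inl i) + e * θ = 0 := by
    simpa using congrFun hx (.inr ())
  by_cases hθ : θ = 0
  · obtain ⟨i, hi⟩ : ∃ i, x (.inl i) ≠ 0 := by
      by_contra! hzero
      exact hx0 (funext fun | .inl i => hzero i | .inr () => hθ)
    have hDi : D i = 0 := by simpa [hθ, hi] using hrow i
    have hsupp : ∀ k ≠ i, x (.inl k) = 0 := fun k hk =>
      (mul_eq_zero.mp (by simpa [hθ] using hrow k)).resolve_left fun hDk => hk (hD k i hDk hDi)
    rw [Finset.sum_eq_single i (fun k _ hk => by simp [hsupp k hk]) (by simp), hθ,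
      mul_zero, add_zero] at hlast
    exact ⟨i, hDi, .inr ((mul_eq_zero.mp hlast).resolve_right hi)⟩
  · by_cases hzero : ∃ i, D i = 0
    · obtain ⟨i, hDi⟩ := hzero
      exact ⟨i, hDi, .inl ((mul_eq_zero.mp (by simpa [hDi] using hrow i)).resolve_right hθ)⟩
    · push Not at hzero
      have hx_inl (i : ι) : x (.inl i) = -(c i * θ) / D i := by
        rw [eq_div_iff (hzero i)]; linear_combination hrow i
      refine absurd ?_ (hschur hzero)
      have hsum : ∑ i, r i * x (.inl i) = -(θ * ∑ i, r i * c i / D i) := by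
        rw [Finset.mul_sum, ← Finset.sum_neg_distrib]
        exact Finset.sum_congr rfl fun i _ => by rw [hx_inl]; ring
      have : θ * (∑ i, r i * c i / D i - e) = 0 := by linear_combination -hlast + hsum
      exact sub_eq_zero.mp ((mul_eq_zero.mp this).resolve_left hθ)

end Matrix

def finTwoMulAddOneEquiv (n : ℕ) : (Fin n ⊕ Fin n) ⊕ Unit ≃ Fin (2 * n + 1) :=
  ((finSumFinEquiv.sumCongr (Equiv.ofUnique Unit (Fin 1))).trans finSumFinEquiv).trans
    (finCongr (by omega))

section ThermoElastic

open Complex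

variable {n : ℕ} {ω a : Fin n → ℝ} {γ κ s : ℝ}

@[simp]
lemma val_finTwoMulAddOneEquiv_inl_inl (j : Fin n) :
    (finTwoMulAddOneEquiv n (.inl (.inl j)) : ℕ) = j := by
  simp [finTwoMulAddOneEquiv]

@[simp]
lemma val_finTwoMulAddOneEquiv_inl_inr (j : Fin n) :
    (finTwoMulAddOneEquiv n (.inl (.inr j)) : ℕ) = n + j := by
  simp [finTwoMulAddOneEquiv, add_comm]

@[simp]
lemma val_finTwoMulAddOneEquiv_inr (u : Unit) :
    (finTwoMulAddOneEquiv n (.inr u) : ℕ) = 2 * n := by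
  simp [finTwoMulAddOneEquiv]

lemma submatrix_smul_one_sub_Bmat (ν : ℂ) :
    (ν • 1 - Bmat n ω a γ κ s).submatrix (finTwoMulAddOneEquiv n) (finTwoMulAddOneEquiv n)
      = arrowhead (fun t => ν - ((Sum.elim ω (-ω) t : ℝ) : ℂ))
          (fun t => -(I * γ * Sum.elim a a t)) (fun t => -(I * γ / 2 * Sum.elim a a t))
          (ν - I * κ * s) := by
  have hlt (k : Fin n) : n + (k : ℕ) < 2 * n := by omega
  have hnlt : ¬ 2 * n < n := by omega
  ext ((i | i) | _) ((j | j) | _) <;>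
    simp [Bmat, arrowhead, one_apply, diagonal_apply, Fin.val_inj, hlt, hnlt] <;>
    split_ifs <;> simp_all

lemma det_smul_one_sub_Bmat (ν : ℂ) :
    det (ν • 1 - Bmat n ω a γ κ s)
      = det (arrowhead (fun t => ν - ((Sum.elim ω (-ω) t : ℝ) : ℂ))
          (fun t => -(I * γ * Sum.elim a a t)) (fun t => -(I * γ / 2 * Sum.elim a a t))
          (ν - I * κ * s)) := by
  rw [← det_submatrix_equiv_self (finTwoMulAddOneEquiv n), submatrix_smul_one_sub_Bmat]

lemma det_smul_one_sub_Bmat_eq_zero_of_coupling_eq_zero {t : Fin n ⊕ Fin n}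
    (ht : Sum.elim a a t = 0) :
    det (((Sum.elim ω (-ω) t : ℝ) : ℂ) • 1 - Bmat n ω a γ κ s) = 0 := by
  rw [det_smul_one_sub_Bmat]
  exact det_arrowhead_eq_zero (i := t) (sub_self _) (by simp [ht])

lemma exists_coupling_eq_zero_of_det_smul_one_sub_Bmat_eq_zero
    (hω : Function.Injective (Sum.elim ω (-ω))) (hκs : κ * s ≠ 0) (hγ : γ ≠ 0) {ν : ℝ}
    (h : det ((ν : ℂ) • 1 - Bmat n ω a γ κ s) = 0) : ∃ t, Sum.elim a a t = 0 := by
  rw [det_smul_one_sub_Bmat] at h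
  have hD (t k) (ht : (ν : ℂ) - ((Sum.elim ω (-ω) t : ℝ) : ℂ) = 0)
      (hk : (ν : ℂ) - ((Sum.elim ω (-ω) k : ℝ) : ℂ) = 0) : t = k :=
    hω (by exact_mod_cast (sub_eq_zero.mp ht).symm.trans (sub_eq_zero.mp hk))
  have hschur : ∑ t, -(I * γ / 2 * Sum.elim a a t) * -(I * γ * Sum.elim a a t)
      / ((ν : ℂ) - ((Sum.elim ω (-ω) t : ℝ) : ℂ)) ≠ ν - I * κ * s := by
    have hreal : ∑ t, -(I * γ / 2 * Sum.elim a a t) * -(I * γ * Sum.elim a a t)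
        / ((ν : ℂ) - ((Sum.elim ω (-ω) t : ℝ) : ℂ))
        = ((∑ t, -(γ ^ 2 / 2 * Sum.elim a a t ^ 2) / (ν - Sum.elim ω (-ω) t) : ℝ) : ℂ) := by
      push_cast
      refine Finset.sum_congr rfl fun t _ => ?_
      congr 1
      linear_combination (γ ^ 2 / 2 * ((Sum.elim a a t : ℝ) : ℂ) ^ 2) * I_sq
    rw [hreal]
    intro heq
    have him : ((ν : ℂ) - I * κ * s).im = -(κ * s) := by simp
    rw [← heq, ofReal_im] at him
    exact hκs (by linarith)
  obtain ⟨t, -, hc | hr⟩ := exists_eq_zero_of_det_arrowhead_eq_zero hD (fun _ => hschur) h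
  · exact ⟨t, by simpa [hγ] using hc⟩
  · exact ⟨t, by simpa [hγ] using hr⟩

end ThermoElastic

/-- for distinct positive eigenvalues κ_j = ω_j², ξ ≠ 0 (i.e. s = |ξ|² > 0),
κ > 0, γ ≠ 0, the matrix B(ξ) has a purely real eigenvalue iff some coupling function
vanishes; if a_j = 0 then ±ω_j are eigenvalues of B(ξ). -/
theorem real_eigenvalue_iff_hyperbolic (n : ℕ) (ω a : Fin n → ℝ) (γ κ s : ℝ)
    (hω : ∀ j, 0 < ω j) (hinj : Function.Injective ω)
    (hs : 0 < s) (hκ : 0 < κ) (hγ : γ ≠ 0) :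
    ((∃ ν : ℝ,
        Matrix.det ((ν : ℂ) • (1 : Matrix (Fin (2 * n + 1)) (Fin (2 * n + 1)) ℂ)
          - Bmat n ω a γ κ s) = 0) ↔ ∃ j, a j = 0)
    ∧ ∀ j, a j = 0 →
        (Matrix.det (((ω j : ℝ) : ℂ) • (1 : Matrix (Fin (2 * n + 1)) (Fin (2 * n + 1)) ℂ)
            - Bmat n ω a γ κ s) = 0
          ∧ Matrix.det ((-(ω j : ℝ) : ℂ) • (1 : Matrix (Fin (2 * n + 1)) (Fin (2 * n + 1)) ℂ)
            - Bmat n ω a γ κ s) = 0) := by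
  have hsigned : Function.Injective (Sum.elim ω (-ω)) :=
    hinj.sumElim (neg_injective.comp hinj) fun i j h => by
      linarith [hω i, hω j, show ω i = -ω j from h]
  have hroots (j : Fin n) (hj : a j = 0) :
      det (((ω j : ℝ) : ℂ) • 1 - Bmat n ω a γ κ s) = 0 ∧
        det ((-(ω j : ℝ) : ℂ) • 1 - Bmat n ω a γ κ s) = 0 :=
    ⟨det_smul_one_sub_Bmat_eq_zero_of_coupling_eq_zero (t := .inl j) hj,
      by simpa using det_smul_one_sub_Bmat_eq_zero_of_coupling_eq_zero (t := .inr j) hj⟩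
  refine ⟨⟨fun ⟨ν, hν⟩ => ?_, fun ⟨j, hj⟩ => ⟨ω j, (hroots j hj).1⟩⟩, hroots⟩
  obtain ⟨j | j, hj⟩ :=
    exists_coupling_eq_zero_of_det_smul_one_sub_Bmat_eq_zero hsigned (by positivity) hγ hν <;>
  exact ⟨j, hj⟩
end

section
/- For the 3×3 cubic elasticity symbol A(η) with parameters μ > 0, τ > 0, the matrix A(η) is positive definite for all unit vectors η ∈ S² if and only if −2μ − τ/2 < λ < τ. -/
open Matrix BigOperators

/-- The cubic-media elastic symbol A(η) in 3D: diagonal (τ−μ)η_i² + μ,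
off-diagonal (λ+μ)η_iη_j. -/
def Acub (τ lam μ : ℝ) (η : Fin 3 → ℝ) : Matrix (Fin 3) (Fin 3) ℝ :=
  Matrix.of fun i j =>
    if i = j then (τ - μ) * η i ^ 2 + μ else (lam + μ) * η i * η j

/-!
Write `A(η) = (λ+μ) ηηᵀ + (τ-λ-2μ) diag(η²) + μ I`. With `s = (η·x)²`, `p = ∑ (ηᵢxᵢ)²` and
`n = |x|²`, the quadratic form is affine in `λ`. At `λ = τ` it equals
`τ s + μ (n + s - 2p) ≥ τ s`, and at `λ = -2μ - τ/2` it equals `(τ/2)(3p - s) + μ (n - s) ≥ μ (n - s)`,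
by Cauchy–Schwarz in the forms `s ≤ 3p`, `s ≤ n` and `2p ≤ n + s`. Interpolating, the form is
positive for `λ` strictly between these values. Conversely, the test pairs
`η = (1,1,0)/√2, x = (1,-1,0)` and `η = (1,1,1)/√3, x = (1,1,1)` give the values `τ - λ` and
`τ + 4μ + 2λ`.
-/

open Finset in
theorem two_mul_sum_sq_mul_sq_le {ι : Type*} [Fintype ι] (η x : ι → ℝ) :
    2 * ∑ i, (η i * x i) ^ 2 ≤ (∑ i, η i ^ 2) * (∑ i, x i ^ 2) + (∑ i, η i * x i) ^ 2 := by
  have hdiag : ∑ i, (η i * x i + η i * x i) ^ 2 ≤ ∑ i, ∑ j, (η i * x j + η j * x i) ^ 2 :=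
    sum_le_sum fun i _ =>
      single_le_sum (f := fun j => (η i * x j + η j * x i) ^ 2) (fun _ _ => sq_nonneg _)
        (mem_univ i)
  have hexpand : ∑ i, ∑ j, (η i * x j + η j * x i) ^ 2
      = 2 * ((∑ i, η i ^ 2) * (∑ i, x i ^ 2) + (∑ i, η i * x i) ^ 2) := by
    have h : ∀ i j, (η i * x j + η j * x i) ^ 2
        = η i ^ 2 * x j ^ 2 + η j ^ 2 * x i ^ 2 + 2 * ((η i * x i) * (η j * x j)) :=
      fun _ _ => by ring
    simp only [h, sum_add_distrib, ← mul_sum, ← sum_mul]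
    ring
  have hdiag_eq : ∑ i, (η i * x i + η i * x i) ^ 2 = 4 * ∑ i, (η i * x i) ^ 2 := by
    rw [mul_sum]
    exact sum_congr rfl fun i _ => by ring
  linarith

theorem elastic_form_pos {τ μ lam s p n : ℝ} (hτ : 0 < τ) (hμ : 0 < μ)
    (h1 : -(2 * μ) - τ / 2 < lam) (h2 : lam < τ)
    (hs : 0 ≤ s) (hsp : s ≤ 3 * p) (hsn : s ≤ n) (hp : 2 * p ≤ n + s) (hn : 0 < n) :
    0 < (lam + μ) * s + (τ - lam - 2 * μ) * p + μ * n := by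
  have hd1 : 0 < lam + 2 * μ + τ / 2 := by linarith
  have hd2 : 0 < τ - lam := by linarith
  have hinterp : (τ + 2 * μ + τ / 2) * ((lam + μ) * s + (τ - lam - 2 * μ) * p + μ * n)
      = (lam + 2 * μ + τ / 2) * (τ * s + μ * (n + s - 2 * p))
        + (τ - lam) * (τ / 2 * (3 * p - s) + μ * (n - s)) := by ring
  have hmain : 0 < (lam + 2 * μ + τ / 2) * (τ * s) + (τ - lam) * (μ * (n - s)) := by
    rcases hs.eq_or_lt with rfl | hs
    · simp only [mul_zero, sub_zero, zero_add]
      positivity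
    · have := sub_nonneg.2 hsn
      have := mul_pos hd1 (mul_pos hτ hs)
      positivity
  have hrest : 0 ≤ (lam + 2 * μ + τ / 2) * (μ * (n + s - 2 * p))
      + (τ - lam) * (τ / 2 * (3 * p - s)) := by
    have := sub_nonneg.2 hp
    have := sub_nonneg.2 hsp
    positivity
  have hsum : 0 < (τ + 2 * μ + τ / 2) * ((lam + μ) * s + (τ - lam - 2 * μ) * p + μ * n) := by
    linarith
  exact pos_of_mul_pos_right hsum (by positivity)

theorem isHermitian_Acub (τ lam μ : ℝ) (η : Fin 3 → ℝ) : (Acub τ lam μ η).IsHermitian := by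
  ext i j
  simp only [conjTranspose_apply, Acub, of_apply, star_trivial, eq_comm (a := j)]
  split_ifs with hij
  · rw [hij]
  · ring

theorem dotProduct_Acub_mulVec (τ lam μ : ℝ) (η x : Fin 3 → ℝ) :
    x ⬝ᵥ (Acub τ lam μ η *ᵥ x) = (lam + μ) * (∑ i, η i * x i) ^ 2
      + (τ - lam - 2 * μ) * ∑ i, (η i * x i) ^ 2 + μ * ∑ i, x i ^ 2 := by
  simp [Acub, mulVec, dotProduct, Fin.sum_univ_three]
  ring

theorem posDef_Acub {τ lam μ : ℝ} (hτ : 0 < τ) (hμ : 0 < μ)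
    (h1 : -(2 * μ) - τ / 2 < lam) (h2 : lam < τ) {η : Fin 3 → ℝ} (hη : ∑ i, η i ^ 2 = 1) :
    (Acub τ lam μ η).PosDef := by
  refine .of_dotProduct_mulVec_pos (isHermitian_Acub τ lam μ η) fun x hx => ?_
  rw [star_trivial, dotProduct_Acub_mulVec]
  have hsp := sq_sum_le_card_mul_sum_sq (s := Finset.univ) (f := fun i => η i * x i)
  have hsn := Finset.sum_mul_sq_le_sq_mul_sq Finset.univ η x
  have hp := two_mul_sum_sq_mul_sq_le η x
  have hn : 0 < ∑ i, x i ^ 2 := by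
    simpa [dotProduct, sq] using dotProduct_star_self_pos_iff.2 hx
  rw [hη, one_mul] at hsn hp
  simp only [Finset.card_univ, Fintype.card_fin, Nat.cast_ofNat] at hsp
  exact elastic_form_pos hτ hμ h1 h2 (sq_nonneg _) hsp hsn hp hn

theorem lam_lt_of_forall_posDef_Acub {τ lam μ : ℝ}
    (h : ∀ η : Fin 3 → ℝ, ∑ i, η i ^ 2 = 1 → (Acub τ lam μ η).PosDef) : lam < τ := by
  obtain ⟨c, hc⟩ : ∃ c : ℝ, c ^ 2 = 1 / 2 := ⟨√(1 / 2), Real.sq_sqrt (by norm_num)⟩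
  have hpos := (h ![c, c, 0] (by simp [Fin.sum_univ_three, hc]; norm_num)).dotProduct_mulVec_pos
    (x := ![1, -1, 0]) (by simp [funext_iff, Fin.forall_fin_succ])
  rw [star_trivial, dotProduct_Acub_mulVec] at hpos
  simp [Fin.sum_univ_three, hc] at hpos
  linarith

theorem lt_lam_of_forall_posDef_Acub {τ lam μ : ℝ}
    (h : ∀ η : Fin 3 → ℝ, ∑ i, η i ^ 2 = 1 → (Acub τ lam μ η).PosDef) :
    -(2 * μ) - τ / 2 < lam := by
  obtain ⟨c, hc⟩ : ∃ c : ℝ, c ^ 2 = 1 / 3 := ⟨√(1 / 3), Real.sq_sqrt (by norm_num)⟩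
  have hpos := (h ![c, c, c] (by simp [Fin.sum_univ_three, hc]; norm_num)).dotProduct_mulVec_pos
    (x := ![1, 1, 1]) (by simp [funext_iff, Fin.forall_fin_succ])
  rw [star_trivial, dotProduct_Acub_mulVec] at hpos
  simp [Fin.sum_univ_three, hc] at hpos
  have h3c : (c + c + c) ^ 2 = 3 := by linear_combination 9 * hc
  rw [h3c] at hpos
  linarith

/-- for μ, τ > 0, the symbol A(η) is positive definite for all unit η
iff −2μ − τ/2 < λ < τ. -/
theorem cubic_posdef_iff (τ μ lam : ℝ) (hτ : 0 < τ) (hμ : 0 < μ) :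
    (∀ η : Fin 3 → ℝ, ∑ i, η i ^ 2 = 1 → (Acub τ lam μ η).PosDef)
      ↔ (-(2 * μ) - τ / 2 < lam ∧ lam < τ) :=
  ⟨fun h => ⟨lt_lam_of_forall_posDef_Acub h, lam_lt_of_forall_posDef_Acub h⟩,
    fun ⟨h1, h2⟩ _ hη => posDef_Acub hτ hμ h1 h2 hη⟩
end

section
/- For cubic media in 3D, a unit vector η ∈ S² is elastically degenerate (i.e. A(η) has fewer than 3 distinct eigenvalues) if η₁² = η₂² = η₃² = 1/3 or if η_i² = 1 for some i, provided τ ≠ λ + 2μ and λ + μ ≠ 0. In the first case the eigenspaces are span{η} and η^⊥; in the second case (say η = e₁) the eigenvalues are τ (eigenvector e₁) and μ with multiplicity two (eigenspace e₁^⊥). -/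
open Matrix BigOperators

/-!
A(η) = μ I + (τ − λ − 2μ) diag(η_i²) + (λ + μ) ηηᵀ. When η_i² = 1/3 for all i the diagonal
term is scalar, and for η = e₁ it equals ηηᵀ; either way A(η) = a (I − ηηᵀ) + b ηηᵀ with η a
unit vector. Such a matrix acts as b on η and as a on η^⊥, and an eigenvector x for c either
has η·x ≠ 0, forcing c = b (dot the equation with η), or lies in η^⊥, forcing c = a.
-/

section TwoEigenvalueMatrix

variable {K n : Type*} [CommRing K] [Fintype n] [DecidableEq n]

def twoEigenvalueMatrix (a b : K) (η : n → K) : Matrix n n K :=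
  a • (1 - vecMulVec η η) + b • vecMulVec η η

variable (a b : K) {η : n → K}

theorem twoEigenvalueMatrix_mulVec (x : n → K) :
    twoEigenvalueMatrix a b η *ᵥ x = a • x + ((b - a) * (η ⬝ᵥ x)) • η := by
  ext i
  simp only [twoEigenvalueMatrix, add_mulVec, smul_mulVec, sub_mulVec, one_mulVec,
    vecMulVec_mulVec, Pi.add_apply, Pi.smul_apply, Pi.sub_apply, smul_eq_mul, op_smul_eq_mul]
  ring

theorem twoEigenvalueMatrix_mulVec_self (hη : η ⬝ᵥ η = 1) :
    twoEigenvalueMatrix a b η *ᵥ η = b • η := by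
  rw [twoEigenvalueMatrix_mulVec, hη, mul_one, ← add_smul, add_sub_cancel]

theorem twoEigenvalueMatrix_mulVec_of_dotProduct_eq_zero {x : n → K} (hx : η ⬝ᵥ x = 0) :
    twoEigenvalueMatrix a b η *ᵥ x = a • x := by
  rw [twoEigenvalueMatrix_mulVec, hx, mul_zero, zero_smul, add_zero]

theorem eq_or_eq_of_twoEigenvalueMatrix_mulVec_eq_smul [NoZeroDivisors K] (hη : η ⬝ᵥ η = 1)
    {c : K} {x : n → K} (hx : x ≠ 0) (h : twoEigenvalueMatrix a b η *ᵥ x = c • x) :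
    c = b ∨ c = a := by
  rw [twoEigenvalueMatrix_mulVec] at h
  have hdot : (c - b) * (η ⬝ᵥ x) = 0 := by
    have := congrArg (η ⬝ᵥ ·) h
    simp only [dotProduct_add, dotProduct_smul, hη, smul_eq_mul] at this
    linear_combination -this
  rcases mul_eq_zero.mp hdot with hcb | horth
  · exact .inl (sub_eq_zero.mp hcb)
  · rw [horth, mul_zero, zero_smul, add_zero] at h
    have : (c - a) • x = 0 := by rw [sub_smul, h, sub_self]
    exact .inr (sub_eq_zero.mp ((smul_eq_zero.mp this).resolve_right hx))

theorem twoEigenvalueMatrix_eigenstructure [NoZeroDivisors K] (hη : η ⬝ᵥ η = 1) :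
    twoEigenvalueMatrix a b η *ᵥ η = b • η
      ∧ (∀ x : n → K, η ⬝ᵥ x = 0 → twoEigenvalueMatrix a b η *ᵥ x = a • x)
      ∧ (∀ c : K, (∃ x : n → K, x ≠ 0 ∧ twoEigenvalueMatrix a b η *ᵥ x = c • x) →
          c = b ∨ c = a) :=
  ⟨twoEigenvalueMatrix_mulVec_self a b hη,
    fun _ hx => twoEigenvalueMatrix_mulVec_of_dotProduct_eq_zero a b hx,
    fun _ ⟨_, hx, h⟩ => eq_or_eq_of_twoEigenvalueMatrix_mulVec_eq_smul a b hη hx h⟩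

end TwoEigenvalueMatrix

theorem Acub_eq_twoEigenvalueMatrix_of_sq_eq_third {τ lam μ : ℝ} {η : Fin 3 → ℝ}
    (hη : ∀ i, η i ^ 2 = 1 / 3) :
    Acub τ lam μ η = twoEigenvalueMatrix ((τ + μ - lam) / 3) ((τ + 2 * lam + 4 * μ) / 3) η := by
  ext i j
  by_cases hij : i = j
  · subst hij
    simp only [Acub, twoEigenvalueMatrix, of_apply, if_true, Matrix.add_apply,
      Matrix.smul_apply, Matrix.sub_apply, one_apply_eq, vecMulVec_apply, smul_eq_mul, ← sq]
    linear_combination (τ - lam - 2 * μ) * hη i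
  · simp only [Acub, twoEigenvalueMatrix, of_apply, hij, if_false, Matrix.add_apply,
      Matrix.smul_apply, Matrix.sub_apply, one_apply_ne hij, vecMulVec_apply, smul_eq_mul]
    ring

theorem Acub_vecCons_one_zero_zero (τ lam μ : ℝ) :
    Acub τ lam μ ![1, 0, 0] = twoEigenvalueMatrix μ τ ![1, 0, 0] := by
  ext i j
  fin_cases i <;> fin_cases j <;> simp [Acub, twoEigenvalueMatrix, one_apply]

theorem cubic_degenerate_directions_general (τ lam μ : ℝ) :
    (∀ η : Fin 3 → ℝ, (∀ i, η i ^ 2 = 1 / 3) →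
      (Acub τ lam μ η).mulVec η = ((τ + 2 * lam + 4 * μ) / 3) • η
      ∧ (∀ x : Fin 3 → ℝ, η ⬝ᵥ x = 0 →
          (Acub τ lam μ η).mulVec x = ((τ + μ - lam) / 3) • x)
      ∧ (∀ c : ℝ, (∃ x : Fin 3 → ℝ, x ≠ 0 ∧ (Acub τ lam μ η).mulVec x = c • x)
          → c = (τ + 2 * lam + 4 * μ) / 3 ∨ c = (τ + μ - lam) / 3))
    ∧ ((Acub τ lam μ ![1, 0, 0]).mulVec ![1, 0, 0] = τ • ![(1 : ℝ), 0, 0]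
      ∧ (∀ x : Fin 3 → ℝ, ![(1 : ℝ), 0, 0] ⬝ᵥ x = 0 →
          (Acub τ lam μ ![1, 0, 0]).mulVec x = μ • x)
      ∧ (∀ c : ℝ, (∃ x : Fin 3 → ℝ, x ≠ 0 ∧ (Acub τ lam μ ![1, 0, 0]).mulVec x = c • x)
          → c = τ ∨ c = μ)) := by
  refine ⟨fun η hη => ?_, ?_⟩
  · have hunit : η ⬝ᵥ η = 1 := by
      simp only [dotProduct, Fin.sum_univ_three, ← sq, hη]
      norm_num
    rw [Acub_eq_twoEigenvalueMatrix_of_sq_eq_third hη]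
    exact twoEigenvalueMatrix_eigenstructure _ _ hunit
  · rw [Acub_vecCons_one_zero_zero]
    exact twoEigenvalueMatrix_eigenstructure _ _ (by simp)

/-- for cubic media (τ ≠ λ+2μ, λ+μ ≠ 0) the directions with
η₁² = η₂² = η₃² = 1/3 and the directions e_i are elastically degenerate: in the first
case the eigenspaces are span{η} (eigenvalue (τ+2λ+4μ)/3) and η^⊥ (eigenvalue
(τ+μ−λ)/3); for η = e₁ the eigenvalues are τ (eigenvector e₁) and μ on e₁^⊥; in both
cases these are the only eigenvalues, so A(η) has fewer than 3 distinct eigenvalues. -/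
theorem cubic_degenerate_directions (τ lam μ : ℝ)
    (hiso : τ ≠ lam + 2 * μ) (hlm : lam + μ ≠ 0) :
    (∀ η : Fin 3 → ℝ, (∀ i, η i ^ 2 = 1 / 3) →
      (Acub τ lam μ η).mulVec η = ((τ + 2 * lam + 4 * μ) / 3) • η
      ∧ (∀ x : Fin 3 → ℝ, η ⬝ᵥ x = 0 →
          (Acub τ lam μ η).mulVec x = ((τ + μ - lam) / 3) • x)
      ∧ (∀ c : ℝ, (∃ x : Fin 3 → ℝ, x ≠ 0 ∧ (Acub τ lam μ η).mulVec x = c • x)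
          → c = (τ + 2 * lam + 4 * μ) / 3 ∨ c = (τ + μ - lam) / 3))
    ∧ ((Acub τ lam μ ![1, 0, 0]).mulVec ![1, 0, 0] = τ • ![(1 : ℝ), 0, 0]
      ∧ (∀ x : Fin 3 → ℝ, ![(1 : ℝ), 0, 0] ⬝ᵥ x = 0 →
          (Acub τ lam μ ![1, 0, 0]).mulVec x = μ • x)
      ∧ (∀ c : ℝ, (∃ x : Fin 3 → ℝ, x ≠ 0 ∧ (Acub τ lam μ ![1, 0, 0]).mulVec x = c • x)
          → c = τ ∨ c = μ)) :=
  cubic_degenerate_directions_general τ lam μ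
end
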